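/- arXiv:1512.09198 — 7 statements merged into one kernel-verified Lean document; each statement's English description precedes it below -/
import Mathlib

section
/- Let V be an oriented 4-dimensional real vector space, ω a 2-form with ω∧ω > 0, g an inner product, and J a complex structure on V compatible with the orientation. Then g(v,w) = ω(v,Jw) for all v,w if and only if dvol_ω = dvol_g and *_g(ω∧λ) = -λ∘J for all covectors λ ∈ V*. -/
/-!
In matrix terms the first condition says `G = A * J`. For a skew `4 × 4` matrix `A` with
Pfaffian `p = (ω ∧ ω) / 2` one has `A * dual2 A = dual2 A * A = -p • 1` and `det A = p²`.
The characterizing identities force `star1 = hodge1 G = √(det G) • G⁻¹` and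
`star3 = hodge3 G = -(√(det G))⁻¹ • G`, so the second condition says `G * dual2 A = √(det G) • Jᵀ`.

If `G = A * J`, symmetry of `G` gives `Jᵀ * A = -G`, hence `G * dual2 A = p • Jᵀ`; moreover
`det G = p² det J`, where `det J = ±1` because `J² = -1`, and `det G > 0` forces `det J = 1`,
i.e. `√(det G) = p`. Conversely, multiplying `G * dual2 A = p • Jᵀ` on the right by `A`
gives `-p • G = p • (Jᵀ * A)`, so `G = -(Jᵀ * A)`, and transposing yields `G = A * J`.
-/

open Matrix MeasureTheory

noncomputable section

/-- Vectors in ℝ⁴. -/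
abbrev V4 : Type := Fin 4 → ℝ

/-- 2-forms on ℝ⁴, represented by their (antisymmetric) coefficient matrices. -/
abbrev Mat4 : Type := Matrix (Fin 4) (Fin 4) ℝ

/-- The wedge product of two 2-forms, as the coefficient of dx0∧dx1∧dx2∧dx3. -/
def w22 (A B : Mat4) : ℝ :=
  A 0 1 * B 2 3 - A 0 2 * B 1 3 + A 0 3 * B 1 2 +
  A 2 3 * B 0 1 - A 1 3 * B 0 2 + A 1 2 * B 0 3

/-- The wedge product of a 1-form and a 3-form (3-forms are written in the
basis σ_m = ι(e_m)(dx0∧dx1∧dx2∧dx3)), as a multiple of dx0∧dx1∧dx2∧dx3. -/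
def w13 (l b : V4) : ℝ := l ⬝ᵥ b

/-- The wedge product of a 2-form and a 1-form, as a 3-form in the basis σ_m. -/
def w21 (A : Mat4) (l : V4) : V4 :=
  ![A 1 2 * l 3 - A 1 3 * l 2 + A 2 3 * l 1,
    -(A 0 2 * l 3 - A 0 3 * l 2 + A 2 3 * l 0),
    A 0 1 * l 3 - A 0 3 * l 1 + A 1 3 * l 0,
    -(A 0 1 * l 2 - A 0 2 * l 1 + A 1 2 * l 0)]

/-- Interior product of a vector with a 2-form. -/
def iota2 (v : V4) (A : Mat4) : V4 := Aᵀ.mulVec v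

/-- Interior product of a vector with a 4-form c·dx0∧dx1∧dx2∧dx3. -/
def iota4 (v : V4) (c : ℝ) : V4 := c • v

/-- The metric volume form of the inner product with Gram matrix G, as a
multiple of dx0∧dx1∧dx2∧dx3 (standard orientation). -/
def volScalar (G : Mat4) : ℝ := Real.sqrt G.det

/-- The inner product with Gram matrix G. -/
def bilin (G : Mat4) (v w : V4) : ℝ := v ⬝ᵥ G.mulVec w

/-- The induced inner product on 1-forms. -/
def ip1 (G : Mat4) (l m : V4) : ℝ := l ⬝ᵥ G⁻¹.mulVec m

/-- The induced inner product on 2-forms. -/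
def ip2 (G : Mat4) (A B : Mat4) : ℝ := (1 / 2) * (Aᵀ * G⁻¹ * B * G⁻¹).trace

/-- The wedge-duality involution on 2-forms (the Hodge star of the standard
metric), characterized by w22 A (dual2 B) = ip2 1 A B. -/
def dual2 (A : Mat4) : Mat4 :=
  !![0, A 2 3, -(A 1 3), A 1 2;
     -(A 2 3), 0, A 0 3, -(A 0 2);
     A 1 3, -(A 0 3), 0, A 0 1;
     -(A 1 2), A 0 2, -(A 0 1), 0]

/-- The Hodge star on 2-forms of the metric with Gram matrix G,
characterized by α ∧ (hodge2 G β) = ⟨α,β⟩_G dvol_G. -/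
def hodge2 (G : Mat4) (A : Mat4) : Mat4 := volScalar G • dual2 (G⁻¹ * A * G⁻¹)

/-- The Hodge star Λ¹ → Λ³ of G, characterized by λ ∧ (hodge1 G μ) = ⟨λ,μ⟩_G dvol_G. -/
def hodge1 (G : Mat4) (m : V4) : V4 := volScalar G • G⁻¹.mulVec m

/-- The Hodge star Λ³ → Λ¹ of G, characterized by hodge1 G (hodge3 G b) = -b. -/
def hodge3 (G : Mat4) (b : V4) : V4 := -((volScalar G)⁻¹ • G.mulVec b)

/-- A complex structure J (J² = -1) is compatible with the standard orientation. -/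
def posOrient (J : Mat4) : Prop :=
  ∃ v w : V4, 0 < (Matrix.of fun i k => ![v, J.mulVec v, w, J.mulVec w] k i).det

/-- The inner product on 2-forms induced by the standard metric. -/
def ip2std (A B : Mat4) : ℝ := (1 / 2) * (Aᵀ * B).trace

/-- The involution R^ρ of the space of 2-forms determined by a
nondegenerate 2-form ρ (with matrix P). -/
def Rmap (P A : Mat4) : Mat4 := A - (w22 A P / (w22 P P / 2)) • P

/-- The standard hyperKähler triple ω₁ = dx0∧dx1 + dx2∧dx3, etc. -/
def sW1 : Mat4 := !![0,1,0,0; -1,0,0,0; 0,0,0,1; 0,0,-1,0]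
def sW2 : Mat4 := !![0,0,1,0; 0,0,0,-1; -1,0,0,0; 0,1,0,0]
def sW3 : Mat4 := !![0,0,0,1; 0,0,1,0; 0,-1,0,0; -1,0,0,0]


section Skew

def skew4 (a b c d e f : ℝ) : Mat4 :=
  !![0, a, b, c; -a, 0, d, e; -b, -d, 0, f; -c, -e, -f, 0]

theorem exists_eq_skew4 {A : Mat4} (hA : Aᵀ = -A) :
    ∃ a b c d e f : ℝ, A = skew4 a b c d e f := by
  have h : ∀ i j, A j i = -A i j := fun i j => by simpa using congrFun (congrFun hA i) j
  have h_diag : ∀ i, A i i = 0 := fun i => by linarith [h i i]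
  refine ⟨A 0 1, A 0 2, A 0 3, A 1 2, A 1 3, A 2 3, ?_⟩
  ext i j
  fin_cases i <;> fin_cases j <;> simp [skew4, h_diag, h 0 1, h 0 2, h 0 3, h 1 2, h 1 3, h 2 3]

theorem w22_skew4_self (a b c d e f : ℝ) :
    w22 (skew4 a b c d e f) (skew4 a b c d e f) = 2 * (a * f - b * e + c * d) := by
  simp [w22, skew4]; ring

theorem det_skew4 (a b c d e f : ℝ) :
    (skew4 a b c d e f).det = (a * f - b * e + c * d) ^ 2 := by
  simp [skew4, det_succ_row_zero, Fin.sum_univ_succ, Fin.succAbove]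
  ring

theorem skew4_mul_dual2 (a b c d e f : ℝ) :
    skew4 a b c d e f * dual2 (skew4 a b c d e f) = (-(a * f - b * e + c * d)) • 1 := by
  ext i j
  fin_cases i <;> fin_cases j <;>
    simp [skew4, dual2, mul_apply, Fin.sum_univ_four, one_apply] <;> ring

theorem dual2_mul_skew4 (a b c d e f : ℝ) :
    dual2 (skew4 a b c d e f) * skew4 a b c d e f = (-(a * f - b * e + c * d)) • 1 := by
  ext i j
  fin_cases i <;> fin_cases j <;>
    simp [skew4, dual2, mul_apply, Fin.sum_univ_four, one_apply] <;> ring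

variable {A : Mat4}

theorem det_eq_sq_of_transpose_eq_neg (hA : Aᵀ = -A) : A.det = (w22 A A / 2) ^ 2 := by
  obtain ⟨a, b, c, d, e, f, rfl⟩ := exists_eq_skew4 hA
  rw [det_skew4, w22_skew4_self]; ring

theorem mul_dual2_of_transpose_eq_neg (hA : Aᵀ = -A) : A * dual2 A = -(w22 A A / 2) • 1 := by
  obtain ⟨a, b, c, d, e, f, rfl⟩ := exists_eq_skew4 hA
  rw [skew4_mul_dual2, w22_skew4_self]; ring_nf

theorem dual2_mul_of_transpose_eq_neg (hA : Aᵀ = -A) : dual2 A * A = -(w22 A A / 2) • 1 := by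
  obtain ⟨a, b, c, d, e, f, rfl⟩ := exists_eq_skew4 hA
  rw [dual2_mul_skew4, w22_skew4_self]; ring_nf

end Skew

theorem w21_eq_dual2_mulVec (A : Mat4) (l : V4) : w21 A l = dual2 A *ᵥ l := by
  ext i
  fin_cases i <;> simp [w21, dual2, mulVec, dotProduct, Fin.sum_univ_four] <;> ring

section Hodge

variable {G : Mat4}

theorem volScalar_pos (hG : 0 < G.det) : 0 < volScalar G := Real.sqrt_pos.mpr hG

theorem eq_hodge1_of_forall_w13 {star1 : V4 → V4}
    (h : ∀ l m : V4, w13 l (star1 m) = ip1 G l m * volScalar G) : star1 = hodge1 G := by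
  funext m
  refine dotProduct_eq _ _ fun l => ?_
  simpa [w13, ip1, hodge1, dotProduct_comm _ l, dotProduct_smul, mul_comm] using h l m

theorem hodge3_hodge1 (hG : 0 < G.det) (v : V4) : hodge3 G (hodge1 G v) = -v := by
  rw [hodge3, hodge1, mulVec_smul, mulVec_mulVec,
    mul_nonsing_inv G (isUnit_iff_ne_zero.mpr hG.ne'), one_mulVec, smul_smul,
    inv_mul_cancel₀ (volScalar_pos hG).ne', one_smul]

theorem hodge1_hodge3 (hG : 0 < G.det) (b : V4) : hodge1 G (hodge3 G b) = -b := by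
  rw [hodge3, hodge1, mulVec_neg, mulVec_smul, mulVec_mulVec,
    nonsing_inv_mul G (isUnit_iff_ne_zero.mpr hG.ne'), one_mulVec, smul_neg, smul_smul,
    mul_inv_cancel₀ (volScalar_pos hG).ne', one_smul]

theorem hodge1_injective (hG : 0 < G.det) : Function.Injective (hodge1 G) := fun v w h => by
  simpa [hodge3_hodge1 hG] using congrArg (hodge3 G) h

theorem eq_hodge3_of_hodge1_comp (hG : 0 < G.det) {star3 : V4 → V4}
    (h : ∀ b : V4, hodge1 G (star3 b) = -b) : star3 = hodge3 G :=
  funext fun b => hodge1_injective hG <| (h b).trans (hodge1_hodge3 hG b).symm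

theorem forall_hodge3_w21_iff (hG : 0 < G.det) (A J : Mat4) :
    (∀ l : V4, hodge3 G (w21 A l) = -(Jᵀ *ᵥ l)) ↔ G * dual2 A = volScalar G • Jᵀ := by
  simp only [hodge3, w21_eq_dual2_mulVec, mulVec_mulVec, neg_inj, ← smul_mulVec,
    ← ext_iff_mulVec]
  exact inv_smul_eq_iff₀ (volScalar_pos hG).ne'

end Hodge

theorem forall_bilin_iff (G M : Mat4) :
    (∀ v w : V4, bilin G v w = v ⬝ᵥ M *ᵥ w) ↔ G = M := by
  refine ⟨fun h => ext_iff_mulVec.mpr fun w => dotProduct_eq _ _ fun v => ?_,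
    fun h _ _ => h ▸ rfl⟩
  rw [dotProduct_comm, ← bilin, h, dotProduct_comm]

theorem det_eq_one_of_mul_self_eq_neg_one {n : Type*} [Fintype n] [DecidableEq n]
    {J : Matrix n n ℝ} (hJ : J * J = -1) (hpos : 0 < J.det) : J.det = 1 := by
  have hsq : J.det * J.det = (-1) ^ Fintype.card n := by
    rw [← det_mul, hJ, det_neg, det_one, mul_one]
  rcases neg_one_pow_eq_or ℝ (Fintype.card n) with h | h <;> rw [h] at hsq <;> nlinarith

section Compatible

variable {G A J : Mat4}

theorem transpose_mul_eq_neg_of_eq_mul (hGt : Gᵀ = G) (hA : Aᵀ = -A) (h : G = A * J) :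
    Jᵀ * A = -G := by
  rw [← hGt, h, transpose_mul, hA, Matrix.mul_neg, neg_neg]

theorem volScalar_eq_of_eq_mul (hG : 0 < G.det) (hA : Aᵀ = -A) (hApos : 0 < w22 A A)
    (hJ : J * J = -1) (h : G = A * J) : volScalar G = w22 A A / 2 := by
  have hdet : G.det = (w22 A A / 2) ^ 2 * J.det := by
    rw [h, det_mul, det_eq_sq_of_transpose_eq_neg hA]
  have hJdet : J.det = 1 :=
    det_eq_one_of_mul_self_eq_neg_one hJ (pos_of_mul_pos_right (hdet ▸ hG) (sq_nonneg _))
  rw [volScalar, hdet, hJdet, mul_one, Real.sqrt_sq (by linarith)]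

theorem mul_dual2_eq_of_eq_mul (hGt : Gᵀ = G) (hA : Aᵀ = -A) (h : G = A * J) :
    G * dual2 A = (w22 A A / 2) • Jᵀ := by
  calc G * dual2 A = -(Jᵀ * (A * dual2 A)) := by
        rw [← Matrix.mul_assoc, transpose_mul_eq_neg_of_eq_mul hGt hA h, neg_mul, neg_neg]
    _ = (w22 A A / 2) • Jᵀ := by rw [mul_dual2_of_transpose_eq_neg hA]; simp

theorem eq_mul_of_mul_dual2_eq (hGt : Gᵀ = G) (hA : Aᵀ = -A) (hA0 : w22 A A ≠ 0)
    (h : G * dual2 A = (w22 A A / 2) • Jᵀ) : G = A * J := by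
  have hJtA : Jᵀ * A = -G := smul_right_injective Mat4 (div_ne_zero hA0 two_ne_zero) <|
    calc (w22 A A / 2) • (Jᵀ * A) = G * (dual2 A * A) := by rw [← Matrix.mul_assoc, h, smul_mul]
      _ = (w22 A A / 2) • -G := by rw [dual2_mul_of_transpose_eq_neg hA]; simp
  calc G = Gᵀ := hGt.symm
    _ = A * J := by
      rw [← neg_neg G, ← hJtA, transpose_neg, transpose_mul, hA, transpose_transpose, neg_mul,
        neg_neg]

theorem eq_mul_iff_volScalar_eq_and_mul_dual2_eq (hG : G.PosDef) (hA : Aᵀ = -A)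
    (hApos : 0 < w22 A A) (hJ : J * J = -1) :
    G = A * J ↔ w22 A A / 2 = volScalar G ∧ G * dual2 A = volScalar G • Jᵀ := by
  have hGt : Gᵀ = G := by simpa using hG.isHermitian.eq
  constructor
  · intro h
    have hvol := volScalar_eq_of_eq_mul hG.det_pos hA hApos hJ h
    exact ⟨hvol.symm, hvol ▸ mul_dual2_eq_of_eq_mul hGt hA h⟩
  · rintro ⟨hvol, h⟩
    exact eq_mul_of_mul_dual2_eq hGt hA hApos.ne' (hvol ▸ h)

end Compatible

theorem compatible_metric_iff_general (G : Mat4) (hG : G.PosDef)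
    (A : Mat4) (hA : Aᵀ = -A) (hApos : 0 < w22 A A)
    (J : Mat4) (hJ : J * J = -1)
    (star1 star3 : V4 → V4)
    (hstar1 : ∀ l m : V4, w13 l (star1 m) = ip1 G l m * volScalar G)
    (hstar3 : ∀ b : V4, star1 (star3 b) = -b) :
    (∀ v w : V4, bilin G v w = v ⬝ᵥ A.mulVec (J.mulVec w)) ↔
      (w22 A A / 2 = volScalar G ∧
        ∀ l : V4, star3 (w21 A l) = -(Jᵀ.mulVec l)) := by
  obtain rfl := eq_hodge1_of_forall_w13 hstar1
  obtain rfl := eq_hodge3_of_hodge1_comp hG.det_pos hstar3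
  rw [forall_hodge3_w21_iff hG.det_pos]
  simp only [mulVec_mulVec, forall_bilin_iff]
  exact eq_mul_iff_volScalar_eq_and_mul_dual2_eq hG hA hApos hJ

/-- g(v,w) = ω(v,Jw) iff dvol_ω = dvol_g and *_g(ω∧λ) = -λ∘J
for all covectors λ. -/
theorem compatible_metric_iff (G : Mat4) (hG : G.PosDef)
    (A : Mat4) (hA : Aᵀ = -A) (hApos : 0 < w22 A A)
    (J : Mat4) (hJ : J * J = -1) (hJor : posOrient J)
    (star1 star3 : V4 → V4)
    (hstar1 : ∀ l m : V4, w13 l (star1 m) = ip1 G l m * volScalar G)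
    (hstar3 : ∀ b : V4, star1 (star3 b) = -b) :
    (∀ v w : V4, bilin G v w = v ⬝ᵥ A.mulVec (J.mulVec w)) ↔
      (w22 A A / 2 = volScalar G ∧
        ∀ l : V4, star3 (w21 A l) = -(Jᵀ.mulVec l)) :=
  compatible_metric_iff_general G hG A hA hApos J hJ star1 star3 hstar1 hstar3

end
end

section
/- Let V be an oriented 4-dimensional real vector space, ω a 2-form with ω∧ω > 0, and g an inner product on V. Then ω is compatible with g (i.e. there exists a complex structure J with g = ω(·,J·)) if and only if dvol_ω = dvol_g and ω is self-dual with respect to g. -/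
open Matrix MeasureTheory

noncomputable section

/-!
Compatibility `A * J = G` with `J * J = -1` forces `J = -G⁻¹ * A`, so it amounts to the matrix
identity `A * G⁻¹ * A = -G`; the orientation condition on `J` is then automatic, because in a basis
`v, Jv, w, Jw` with `w` `g`-orthogonal to `v` and `Jv` the Pfaffian of `ω` is `g(v,v) g(w,w) > 0`.
Taking determinants of `A * G⁻¹ * A = -G` gives `det G = pf(A)²`, i.e. `dvol_g = dvol_ω`. Since
`A * dual2 A = -pf(A) • 1`, the same identity says `dual2 A = pf(A) • G⁻¹ * A * G⁻¹`, which is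
self-duality `⋆_g A = A`. Finally, any `star2` with the defining property of the Hodge star equals
`hodge2 G` on 2-forms, because the wedge pairing is nondegenerate.
-/

def pfaffian (A : Mat4) : ℝ := A 0 1 * A 2 3 - A 0 2 * A 1 3 + A 0 3 * A 1 2

lemma exists_eq_of_transpose_eq_neg {A : Mat4} (hA : Aᵀ = -A) : ∃ a b c d e f : ℝ,
    A = !![0, a, b, c; -a, 0, d, e; -b, -d, 0, f; -c, -e, -f, 0] := by
  refine ⟨A 0 1, A 0 2, A 0 3, A 1 2, A 1 3, A 2 3, ?_⟩
  have h : ∀ i j, A j i = -A i j := fun i j => by simpa using congrFun (congrFun hA i) j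
  ext i j
  fin_cases i <;> fin_cases j <;> simp <;>
    linarith [h 0 0, h 1 1, h 2 2, h 3 3, h 0 1, h 0 2, h 0 3, h 1 2, h 1 3, h 2 3]

lemma w22_self (A : Mat4) : w22 A A = 2 * pfaffian A := by
  simp only [w22, pfaffian]; ring

lemma dual2_transpose (A : Mat4) : (dual2 A)ᵀ = -dual2 A := by
  ext i j
  fin_cases i <;> fin_cases j <;> simp [dual2]

lemma dual2_smul (c : ℝ) (A : Mat4) : dual2 (c • A) = c • dual2 A := by
  ext i j
  fin_cases i <;> fin_cases j <;> simp [dual2]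

lemma dual2_dual2 {A : Mat4} (hA : Aᵀ = -A) : dual2 (dual2 A) = A := by
  obtain ⟨a, b, c, d, e, f, rfl⟩ := exists_eq_of_transpose_eq_neg hA
  ext i j
  fin_cases i <;> fin_cases j <;> simp [dual2]

lemma mul_dual2 {A : Mat4} (hA : Aᵀ = -A) : A * dual2 A = -pfaffian A • 1 := by
  obtain ⟨a, b, c, d, e, f, rfl⟩ := exists_eq_of_transpose_eq_neg hA
  ext i j
  fin_cases i <;> fin_cases j <;>
    simp [dual2, pfaffian, Matrix.mul_apply, Fin.sum_univ_four] <;> ring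

lemma det_eq_pfaffian_sq {A : Mat4} (hA : Aᵀ = -A) : A.det = pfaffian A ^ 2 := by
  obtain ⟨a, b, c, d, e, f, rfl⟩ := exists_eq_of_transpose_eq_neg hA
  simp [Matrix.det_succ_row_zero, Fin.sum_univ_succ, pfaffian, Fin.succAbove]
  ring

lemma w22_dual2 {B X : Mat4} (hB : Bᵀ = -B) (hX : Xᵀ = -X) :
    w22 B (dual2 X) = -(1 / 2) * (B * X).trace := by
  obtain ⟨a, b, c, d, e, f, rfl⟩ := exists_eq_of_transpose_eq_neg hB
  obtain ⟨a', b', c', d', e', f', rfl⟩ := exists_eq_of_transpose_eq_neg hX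
  simp [w22, dual2, Matrix.trace, Fin.sum_univ_four]
  ring

lemma pfaffian_transpose_mul_mul {A : Mat4} (hA : Aᵀ = -A) (P : Mat4) :
    pfaffian (Pᵀ * A * P) = P.det * pfaffian A := by
  obtain ⟨a, b, c, d, e, f, rfl⟩ := exists_eq_of_transpose_eq_neg hA
  simp [Matrix.det_succ_row_zero, Fin.sum_univ_succ, Fin.succAbove, pfaffian, Matrix.mul_apply]
  ring

lemma eq_of_forall_w22_eq {D D' : Mat4} (hD : Dᵀ = -D) (hD' : D'ᵀ = -D')
    (h : ∀ B : Mat4, Bᵀ = -B → w22 B D = w22 B D') : D = D' := by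
  -- paired with `dual2 (D - D')`, the difference `D - D'` gives the sum of squares of its entries
  have hsq := h (dual2 (D - D')) (dual2_transpose _)
  obtain ⟨a, b, c, d, e, f, rfl⟩ := exists_eq_of_transpose_eq_neg hD
  obtain ⟨a', b', c', d', e', f', rfl⟩ := exists_eq_of_transpose_eq_neg hD'
  simp only [w22, dual2, Fin.isValue, Matrix.sub_apply, Matrix.of_apply, Matrix.cons_val',
    Matrix.cons_val, Matrix.cons_val_fin_one, Matrix.cons_val_one, Matrix.cons_val_zero,
    neg_sub] at hsq
  have : a = a' ∧ b = b' ∧ c = c' ∧ d = d' ∧ e = e' ∧ f = f' := by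
    refine ⟨?_, ?_, ?_, ?_, ?_, ?_⟩ <;>
      nlinarith [sq_nonneg (a - a'), sq_nonneg (b - b'), sq_nonneg (c - c'),
        sq_nonneg (d - d'), sq_nonneg (e - e'), sq_nonneg (f - f')]
  obtain ⟨rfl, rfl, rfl, rfl, rfl, rfl⟩ := this
  rfl

lemma transpose_inv_mul_mul_inv {n R : Type*} [Fintype n] [DecidableEq n] [CommRing R]
    {G A : Matrix n n R} (hG : Gᵀ = G) (hA : Aᵀ = -A) :
    (G⁻¹ * A * G⁻¹)ᵀ = -(G⁻¹ * A * G⁻¹) := by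
  simp [Matrix.transpose_mul, Matrix.transpose_nonsing_inv, hG, hA, Matrix.mul_assoc]

lemma star2_eq_hodge2 {G : Mat4} (hG : Gᵀ = G) {star2 : Mat4 → Mat4}
    (hstar2 : ∀ B C : Mat4, Bᵀ = -B → Cᵀ = -C → w22 B (star2 C) = ip2 G B C * volScalar G)
    (hstar2' : ∀ C : Mat4, Cᵀ = -C → (star2 C)ᵀ = -(star2 C)) {C : Mat4} (hC : Cᵀ = -C) :
    star2 C = hodge2 G C := by
  have hX := transpose_inv_mul_mul_inv hG hC
  have hhodge : (hodge2 G C)ᵀ = -hodge2 G C := by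
    rw [hodge2, Matrix.transpose_smul, dual2_transpose, smul_neg]
  refine eq_of_forall_w22_eq (hstar2' C hC) hhodge fun B hB => ?_
  rw [hstar2 B C hB hC, hodge2, ← dual2_smul,
    w22_dual2 hB (by rw [Matrix.transpose_smul, hX, smul_neg]), ip2, hB]
  simp only [Matrix.neg_mul, Matrix.mul_smul, Matrix.trace_neg, Matrix.trace_smul, smul_eq_mul,
    Matrix.mul_assoc]
  ring

lemma dual2_eq_iff {A X : Mat4} (hA : Aᵀ = -A) (hX : Xᵀ = -X) :
    dual2 X = A ↔ X = dual2 A := by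
  constructor
  · rintro rfl; rw [dual2_dual2 hX]
  · rintro rfl; rw [dual2_dual2 hA]

lemma hodge2_eq_self_iff {G A : Mat4} (hG : Gᵀ = G) (hA : Aᵀ = -A) :
    hodge2 G A = A ↔ dual2 A = volScalar G • (G⁻¹ * A * G⁻¹) := by
  rw [hodge2, ← dual2_smul, dual2_eq_iff hA, eq_comm]
  rw [Matrix.transpose_smul, transpose_inv_mul_mul_inv hG hA, smul_neg]

lemma dual2_eq_smul_iff {A G : Mat4} (hA : Aᵀ = -A) (hp : pfaffian A ≠ 0) (hG : IsUnit G.det) :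
    dual2 A = pfaffian A • (G⁻¹ * A * G⁻¹) ↔ A * G⁻¹ * A = -G := by
  have hAu : IsUnit A := (Matrix.isUnit_iff_isUnit_det A).2 <| by
    rw [det_eq_pfaffian_sq hA]; exact (pow_ne_zero 2 hp).isUnit
  rw [← hAu.mul_right_inj, mul_dual2 hA, Matrix.mul_smul, neg_smul, ← smul_neg,
    (smul_right_injective Mat4 hp).eq_iff, ← Matrix.mul_assoc, ← Matrix.mul_assoc]
  constructor
  · intro h
    rw [← Matrix.nonsing_inv_mul_cancel_right G (A * G⁻¹ * A) hG, ← h, Matrix.neg_mul,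
      Matrix.one_mul]
  · intro h
    rw [h, Matrix.neg_mul, Matrix.mul_nonsing_inv _ hG]

lemma volScalar_eq_pfaffian {A G : Mat4} (hA : Aᵀ = -A) (hp : 0 ≤ pfaffian A) (hG : 0 < G.det)
    (h : A * G⁻¹ * A = -G) : volScalar G = pfaffian A := by
  have hdet : G.det ^ 2 = (pfaffian A ^ 2) ^ 2 := by
    have := congrArg Matrix.det h
    rw [Matrix.det_mul, Matrix.det_mul, Matrix.det_nonsing_inv, Matrix.det_neg,
      det_eq_pfaffian_sq hA, Ring.inverse_eq_inv', Fintype.card_fin] at this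
    field_simp at this
    linear_combination -this
  rw [volScalar, (sq_eq_sq₀ hG.le (by positivity)).1 hdet, Real.sqrt_sq hp]

lemma mul_inv_mul_eq_neg_iff {A G : Mat4} (hA : Aᵀ = -A) (hp : 0 < pfaffian A)
    (hG : 0 < G.det) : A * G⁻¹ * A = -G ↔
      pfaffian A = volScalar G ∧ dual2 A = volScalar G • (G⁻¹ * A * G⁻¹) := by
  have hGu : IsUnit G.det := hG.ne'.isUnit
  constructor
  · intro h
    have hvol := volScalar_eq_pfaffian hA hp.le hG h
    rw [hvol]
    exact ⟨rfl, (dual2_eq_smul_iff hA hp.ne' hGu).2 h⟩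
  · rintro ⟨hvol, hdual⟩
    rw [← hvol] at hdual
    exact (dual2_eq_smul_iff hA hp.ne' hGu).1 hdual

lemma exists_mul_self_eq_neg_one_and_mul_eq_iff {n K : Type*} [Fintype n] [DecidableEq n]
    [CommRing K] {A G : Matrix n n K} (hG : IsUnit G.det) :
    (∃ J, J * J = -1 ∧ A * J = G) ↔ A * G⁻¹ * A = -G := by
  constructor
  · rintro ⟨J, hJ, rfl⟩
    calc A * (A * J)⁻¹ * A = A * (A * J)⁻¹ * -(A * J * J) := by
          rw [Matrix.mul_assoc A J J, hJ]; simp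
      _ = -(A * ((A * J)⁻¹ * (A * J)) * J) := by simp only [Matrix.mul_neg, Matrix.mul_assoc]
      _ = -(A * J) := by rw [Matrix.nonsing_inv_mul _ hG, Matrix.mul_one]
  · intro h
    refine ⟨-(G⁻¹ * A), ?_, ?_⟩
    · rw [neg_mul_neg, Matrix.mul_assoc, ← Matrix.mul_assoc A, h, Matrix.mul_neg,
        Matrix.nonsing_inv_mul _ hG]
    · rw [Matrix.mul_neg, ← Matrix.mul_assoc, h, neg_neg]

lemma forall_dotProduct_mulVec_eq_iff {m n R : Type*} [Fintype m] [Fintype n] [CommSemiring R]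
    {M N : Matrix m n R} : (∀ v w, v ⬝ᵥ M *ᵥ w = v ⬝ᵥ N *ᵥ w) ↔ M = N := by
  simp_rw [Matrix.ext_iff_mulVec, ← dotProduct_eq_iff]
  exact forall_comm.trans (by simp_rw [dotProduct_comm])

lemma exists_ne_zero_forall_dotProduct_eq_zero {n K : Type*} [Fintype n] [Field K] {k : ℕ}
    (hk : k < Fintype.card n) (a : Fin k → n → K) : ∃ w ≠ 0, ∀ i, a i ⬝ᵥ w = 0 := by
  have hker : LinearMap.ker (Matrix.of a).mulVecLin ≠ ⊥ :=
    LinearMap.ker_ne_bot_of_finrank_lt (by simpa using hk)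
  obtain ⟨w, hw, hw0⟩ := (Submodule.ne_bot_iff _).1 hker
  exact ⟨w, hw0, fun i => by simpa [Matrix.mulVec] using congrFun (LinearMap.mem_ker.1 hw) i⟩

lemma posOrient_of_mul_eq {A G J : Mat4} (hA : Aᵀ = -A) (hp : 0 < pfaffian A) (hG : G.PosDef)
    (hAJ : A * J = G) : posOrient J := by
  obtain ⟨v, hv⟩ : ∃ v : V4, v ≠ 0 := exists_ne 0
  obtain ⟨w, hw, hvw⟩ :=
    exists_ne_zero_forall_dotProduct_eq_zero (by simp) ![v ᵥ* G, (J *ᵥ v) ᵥ* G]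
  have hvGw : v ⬝ᵥ G *ᵥ w = 0 := by rw [Matrix.dotProduct_mulVec]; exact hvw 0
  have hJvGw : (J *ᵥ v) ⬝ᵥ G *ᵥ w = 0 := by rw [Matrix.dotProduct_mulVec]; exact hvw 1
  set b : Fin 4 → V4 := ![v, J *ᵥ v, w, J *ᵥ w]
  set P : Mat4 := Matrix.of fun i k => b k i
  have hP : ∀ i j, (Pᵀ * A * P) i j = b i ⬝ᵥ A *ᵥ b j := fun i j =>
    Matrix.mul_mul_apply _ _ _ i j
  have hpf : pfaffian (Pᵀ * A * P) = (v ⬝ᵥ G *ᵥ v) * (w ⬝ᵥ G *ᵥ w) := by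
    simp [pfaffian, hP, b, Matrix.mulVec_mulVec, hAJ, hvGw, hJvGw]
  have hpos : 0 < P.det * pfaffian A := by
    rw [← pfaffian_transpose_mul_mul hA, hpf]
    exact mul_pos (hG.dotProduct_mulVec_pos hv) (hG.dotProduct_mulVec_pos hw)
  exact ⟨v, w, pos_of_mul_pos_left hpos hp.le⟩

/-- ω is compatible with g (there is an orientation-compatible
complex structure J with ω(·,J·) = g) iff dvol_ω = dvol_g and ω is self-dual. -/
theorem compatible_iff_selfdual (G : Mat4) (hG : G.PosDef)
    (A : Mat4) (hA : Aᵀ = -A) (hApos : 0 < w22 A A)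
    (star2 : Mat4 → Mat4)
    (hstar2 : ∀ B C : Mat4, Bᵀ = -B → Cᵀ = -C →
      w22 B (star2 C) = ip2 G B C * volScalar G)
    (hstar2' : ∀ C : Mat4, Cᵀ = -C → (star2 C)ᵀ = -(star2 C)) :
    (∃ J : Mat4, J * J = -1 ∧ posOrient J ∧
        ∀ v w : V4, v ⬝ᵥ A.mulVec (J.mulVec w) = bilin G v w) ↔
      (w22 A A / 2 = volScalar G ∧ star2 A = A) := by
  have hGsymm : Gᵀ = G := by simpa using hG.isHermitian.eq
  have hp : 0 < pfaffian A := by linarith [w22_self A]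
  rw [show w22 A A / 2 = pfaffian A by rw [w22_self]; ring,
    star2_eq_hodge2 hGsymm hstar2 hstar2' hA, hodge2_eq_self_iff hGsymm hA,
    ← mul_inv_mul_eq_neg_iff hA hp hG.det_pos,
    ← exists_mul_self_eq_neg_one_and_mul_eq_iff hG.det_pos.ne'.isUnit]
  refine exists_congr fun J => ?_
  simp_rw [bilin, Matrix.mulVec_mulVec, forall_dotProduct_mulVec_eq_iff]
  exact ⟨fun ⟨hJ, _, hAJ⟩ => ⟨hJ, hAJ⟩,
    fun ⟨hJ, hAJ⟩ => ⟨hJ, posOrient_of_mul_eq hA hp hG hAJ, hAJ⟩⟩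

end
end

section
/- Let V be an oriented 4-dimensional real vector space, let ω₁, ω₂, ω₃ be nondegenerate 2-forms with positive squares, and let J₁, J₂, J₃ ∈ GL(V) be defined by ω₂(·,J₃·) = ω₁, ω₃(·,J₁·) = ω₂, ω₁(·,J₂·) = ω₃. Then the following are equivalent: (i) ωᵢ∧ωⱼ = 0 for i≠j and ω₁∧ω₁ = ω₂∧ω₂ = ω₃∧ω₃; (ii) Jᵢ² = -1 and JⱼJₖ = -JₖJⱼ = Jᵢ for every cyclic permutation (i,j,k) of (1,2,3). -/
open Matrix MeasureTheory

noncomputable section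

lemma hk_antisym (A : Mat4) (hA : Aᵀ = -A) : ∀ i j, A j i = -A i j := by
  intro i j
  have := congrFun (congrFun hA i) j
  simpa [Matrix.transpose_apply] using this

lemma hk_w22_comm (A B : Mat4) : w22 A B = w22 B A := by unfold w22; ring

lemma hk_det4 (A : Mat4) : A.det =
    A 0 0 * A 1 1 * A 2 2 * A 3 3 - A 0 0 * A 1 1 * A 2 3 * A 3 2 - A 0 0 * A 1 2 * A 2 1 * A 3 3
  + A 0 0 * A 1 2 * A 2 3 * A 3 1 + A 0 0 * A 1 3 * A 2 1 * A 3 2 - A 0 0 * A 1 3 * A 2 2 * A 3 1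
  - A 0 1 * A 1 0 * A 2 2 * A 3 3 + A 0 1 * A 1 0 * A 2 3 * A 3 2 + A 0 1 * A 1 2 * A 2 0 * A 3 3
  - A 0 1 * A 1 2 * A 2 3 * A 3 0 - A 0 1 * A 1 3 * A 2 0 * A 3 2 + A 0 1 * A 1 3 * A 2 2 * A 3 0
  + A 0 2 * A 1 0 * A 2 1 * A 3 3 - A 0 2 * A 1 0 * A 2 3 * A 3 1 - A 0 2 * A 1 1 * A 2 0 * A 3 3
  + A 0 2 * A 1 1 * A 2 3 * A 3 0 + A 0 2 * A 1 3 * A 2 0 * A 3 1 - A 0 2 * A 1 3 * A 2 1 * A 3 0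
  - A 0 3 * A 1 0 * A 2 1 * A 3 2 + A 0 3 * A 1 0 * A 2 2 * A 3 1 + A 0 3 * A 1 1 * A 2 0 * A 3 2
  - A 0 3 * A 1 1 * A 2 2 * A 3 0 - A 0 3 * A 1 2 * A 2 0 * A 3 1 + A 0 3 * A 1 2 * A 2 1 * A 3 0 := by
  rw [Matrix.det_succ_row_zero]
  simp [Fin.sum_univ_succ, Matrix.det_fin_three, Matrix.submatrix,
    show (Fin.succ 2 : Fin 4) = 3 from rfl,
    show Fin.succAbove (1:Fin 4) (2:Fin 3) = 3 from by decide,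
    show Fin.succAbove (2:Fin 4) (2:Fin 3) = 3 from by decide,
    show Fin.succAbove (3:Fin 4) (2:Fin 3) = 2 from by decide,
    show (Fin.castSucc (2:Fin 3) : Fin 4) = 2 from rfl]
  ring

lemma hk_L1 (A B : Mat4) (hA : Aᵀ = -A) (hB : Bᵀ = -B) :
    A * dual2 B + B * dual2 A = (-(w22 A B)) • (1 : Mat4) := by
  have ha := hk_antisym A hA
  have hb := hk_antisym B hB
  have ha00 : A 0 0 = 0 := by have := ha 0 0; linarith
  have ha11 : A 1 1 = 0 := by have := ha 1 1; linarith
  have ha22 : A 2 2 = 0 := by have := ha 2 2; linarith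
  have ha33 : A 3 3 = 0 := by have := ha 3 3; linarith
  have hb00 : B 0 0 = 0 := by have := hb 0 0; linarith
  have hb11 : B 1 1 = 0 := by have := hb 1 1; linarith
  have hb22 : B 2 2 = 0 := by have := hb 2 2; linarith
  have hb33 : B 3 3 = 0 := by have := hb 3 3; linarith
  ext i j
  fin_cases i <;> fin_cases j <;>
    simp [Matrix.mul_apply, Fin.sum_univ_four, dual2, w22, Matrix.one_apply,
      Matrix.vecMul, dotProduct,
      ha00, ha11, ha22, ha33, hb00, hb11, hb22, hb33,
      ha 0 1, ha 0 2, ha 0 3, ha 1 2, ha 1 3, ha 2 3,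
      hb 0 1, hb 0 2, hb 0 3, hb 1 2, hb 1 3, hb 2 3] <;> ring

lemma hk_L1' (A B : Mat4) (hA : Aᵀ = -A) (hB : Bᵀ = -B) :
    dual2 A * B + dual2 B * A = (-(w22 A B)) • (1 : Mat4) := by
  have ha := hk_antisym A hA
  have hb := hk_antisym B hB
  have ha00 : A 0 0 = 0 := by have := ha 0 0; linarith
  have ha11 : A 1 1 = 0 := by have := ha 1 1; linarith
  have ha22 : A 2 2 = 0 := by have := ha 2 2; linarith
  have ha33 : A 3 3 = 0 := by have := ha 3 3; linarith
  have hb00 : B 0 0 = 0 := by have := hb 0 0; linarith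
  have hb11 : B 1 1 = 0 := by have := hb 1 1; linarith
  have hb22 : B 2 2 = 0 := by have := hb 2 2; linarith
  have hb33 : B 3 3 = 0 := by have := hb 3 3; linarith
  ext i j
  fin_cases i <;> fin_cases j <;>
    simp [Matrix.mul_apply, Fin.sum_univ_four, dual2, w22, Matrix.one_apply,
      Matrix.vecMul, dotProduct,
      ha00, ha11, ha22, ha33, hb00, hb11, hb22, hb33,
      ha 0 1, ha 0 2, ha 0 3, ha 1 2, ha 1 3, ha 2 3,
      hb 0 1, hb 0 2, hb 0 3, hb 1 2, hb 1 3, hb 2 3] <;> ring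

lemma hk_self (A : Mat4) (hA : Aᵀ = -A) :
    A * dual2 A = (-(w22 A A / 2)) • (1 : Mat4) := by
  have h := hk_L1 A A hA hA
  apply smul_right_injective Mat4 (two_ne_zero (α := ℝ))
  show (2:ℝ) • (A * dual2 A) = (2:ℝ) • ((-(w22 A A / 2)) • (1:Mat4))
  rw [two_smul, h, smul_smul]
  congr 1
  ring

lemma hk_self' (A : Mat4) (hA : Aᵀ = -A) :
    dual2 A * A = (-(w22 A A / 2)) • (1 : Mat4) := by
  have h := hk_L1' A A hA hA
  apply smul_right_injective Mat4 (two_ne_zero (α := ℝ))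
  show (2:ℝ) • (dual2 A * A) = (2:ℝ) • ((-(w22 A A / 2)) • (1:Mat4))
  rw [two_smul, h, smul_smul]
  congr 1
  ring

lemma hk_trace (A B : Mat4) (hA : Aᵀ = -A) :
    (A * dual2 B).trace = -2 * w22 A B := by
  have ha := hk_antisym A hA
  have ha00 : A 0 0 = 0 := by have := ha 0 0; linarith
  have ha11 : A 1 1 = 0 := by have := ha 1 1; linarith
  have ha22 : A 2 2 = 0 := by have := ha 2 2; linarith
  have ha33 : A 3 3 = 0 := by have := ha 3 3; linarith
  simp [Matrix.trace, Matrix.mul_apply, Fin.sum_univ_four, dual2, w22, Matrix.diag,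
    ha00, ha11, ha22, ha33, ha 0 1, ha 0 2, ha 0 3, ha 1 2, ha 1 3, ha 2 3]
  ring

lemma hk_det (A : Mat4) (hA : Aᵀ = -A) : A.det = (w22 A A / 2)^2 := by
  have ha := hk_antisym A hA
  have ha00 : A 0 0 = 0 := by have := ha 0 0; linarith
  have ha11 : A 1 1 = 0 := by have := ha 1 1; linarith
  have ha22 : A 2 2 = 0 := by have := ha 2 2; linarith
  have ha33 : A 3 3 = 0 := by have := ha 3 3; linarith
  rw [hk_det4]
  simp only [w22, ha00, ha11, ha22, ha33, ha 0 1, ha 0 2, ha 0 3, ha 1 2, ha 1 3, ha 2 3]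
  ring

/-- for nondegenerate 2-forms ω₁,ω₂,ω₃ with positive squares and
J₁,J₂,J₃ determined by ω₂(·,J₃·)=ω₁, ω₃(·,J₁·)=ω₂, ω₁(·,J₂·)=ω₃, the wedge
conditions (i) are equivalent to the quaternion relations (ii). -/
theorem hyperkahler_triple_iff (W1 W2 W3 J1 J2 J3 : Mat4)
    (hW1 : W1ᵀ = -W1) (hW2 : W2ᵀ = -W2) (hW3 : W3ᵀ = -W3)
    (hW1pos : 0 < w22 W1 W1) (hW2pos : 0 < w22 W2 W2) (hW3pos : 0 < w22 W3 W3)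
    (hJ3 : W2 * J3 = W1) (hJ1 : W3 * J1 = W2) (hJ2 : W1 * J2 = W3) :
    (w22 W1 W2 = 0 ∧ w22 W1 W3 = 0 ∧ w22 W2 W3 = 0 ∧
        w22 W1 W1 = w22 W2 W2 ∧ w22 W2 W2 = w22 W3 W3) ↔
      (J1 * J1 = -1 ∧ J2 * J2 = -1 ∧ J3 * J3 = -1 ∧
        J1 * J2 = J3 ∧ J2 * J1 = -J3 ∧
        J2 * J3 = J1 ∧ J3 * J2 = -J1 ∧
        J3 * J1 = J2 ∧ J1 * J3 = -J2) := by
  constructor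
  · rintro ⟨h12, h13, h23, hs12, hs23⟩
    set p : ℝ := w22 W1 W1 / 2 with hp
    have hp0 : 0 < p := by rw [hp]; linarith
    have e1 : W1 * dual2 W1 = (-p) • (1:Mat4) := by rw [hk_self W1 hW1]
    have e2 : W2 * dual2 W2 = (-p) • (1:Mat4) := by rw [hk_self W2 hW2, hp, hs12]
    have e3 : W3 * dual2 W3 = (-p) • (1:Mat4) := by rw [hk_self W3 hW3, hp, hs12, hs23]
    have e1' : dual2 W1 * W1 = (-p) • (1:Mat4) := by rw [hk_self' W1 hW1]
    have e2' : dual2 W2 * W2 = (-p) • (1:Mat4) := by rw [hk_self' W2 hW2, hp, hs12]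
    have e3' : dual2 W3 * W3 = (-p) • (1:Mat4) := by rw [hk_self' W3 hW3, hp, hs12, hs23]
    -- swap rules
    have s12 : W1 * dual2 W2 = -(W2 * dual2 W1) := by
      have h := hk_L1 W1 W2 hW1 hW2
      rw [h12] at h; simp only [neg_zero, zero_smul] at h
      exact eq_neg_of_add_eq_zero_left h
    have s21 : W2 * dual2 W1 = -(W1 * dual2 W2) := by rw [s12, neg_neg]
    have s13 : W1 * dual2 W3 = -(W3 * dual2 W1) := by
      have h := hk_L1 W1 W3 hW1 hW3
      rw [h13] at h; simp only [neg_zero, zero_smul] at h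
      exact eq_neg_of_add_eq_zero_left h
    have s31 : W3 * dual2 W1 = -(W1 * dual2 W3) := by rw [s13, neg_neg]
    have s23 : W2 * dual2 W3 = -(W3 * dual2 W2) := by
      have h := hk_L1 W2 W3 hW2 hW3
      rw [h23] at h; simp only [neg_zero, zero_smul] at h
      exact eq_neg_of_add_eq_zero_left h
    have s32 : W3 * dual2 W2 = -(W2 * dual2 W3) := by rw [s23, neg_neg]
    have t12 : dual2 W1 * W2 = -(dual2 W2 * W1) := by
      have h := hk_L1' W1 W2 hW1 hW2
      rw [h12] at h; simp only [neg_zero, zero_smul] at h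
      exact eq_neg_of_add_eq_zero_left h
    have t21 : dual2 W2 * W1 = -(dual2 W1 * W2) := by rw [t12, neg_neg]
    have t13 : dual2 W1 * W3 = -(dual2 W3 * W1) := by
      have h := hk_L1' W1 W3 hW1 hW3
      rw [h13] at h; simp only [neg_zero, zero_smul] at h
      exact eq_neg_of_add_eq_zero_left h
    have t31 : dual2 W3 * W1 = -(dual2 W1 * W3) := by rw [t13, neg_neg]
    have t23 : dual2 W2 * W3 = -(dual2 W3 * W2) := by
      have h := hk_L1' W2 W3 hW2 hW3
      rw [h23] at h; simp only [neg_zero, zero_smul] at h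
      exact eq_neg_of_add_eq_zero_left h
    have t32 : dual2 W3 * W2 = -(dual2 W2 * W3) := by rw [t23, neg_neg]
    -- scaled J's
    have c3 : (-p) • J3 = dual2 W2 * W1 := by
      have h : dual2 W2 * (W2 * J3) = dual2 W2 * W1 := by rw [hJ3]
      rwa [← mul_assoc, e2', smul_mul_assoc, one_mul] at h
    have c1 : (-p) • J1 = dual2 W3 * W2 := by
      have h : dual2 W3 * (W3 * J1) = dual2 W3 * W2 := by rw [hJ1]
      rwa [← mul_assoc, e3', smul_mul_assoc, one_mul] at h
    have c2 : (-p) • J2 = dual2 W1 * W3 := by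
      have h : dual2 W1 * (W1 * J2) = dual2 W1 * W3 := by rw [hJ2]
      rwa [← mul_assoc, e1', smul_mul_assoc, one_mul] at h
    have cancel : ∀ X Y : Mat4, (-p) • X = (-p) • Y → X = Y :=
      fun X Y h => smul_right_injective Mat4 (neg_ne_zero.mpr hp0.ne') h
    have sq_chain : -(((-p) • (1:Mat4)) * ((-p) • (1:Mat4))) = (-p) • ((-p) • (-1 : Mat4)) := by
      rw [smul_mul_assoc, mul_smul_comm, one_mul]
      simp [smul_neg]
    refine ⟨?_, ?_, ?_, ?_, ?_, ?_, ?_, ?_, ?_⟩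
    · -- J1 * J1 = -1
      apply cancel; apply cancel
      calc (-p) • ((-p) • (J1 * J1)) = ((-p) • J1) * ((-p) • J1) := by
            rw [smul_mul_assoc, mul_smul_comm]
        _ = (dual2 W3 * W2) * (dual2 W3 * W2) := by rw [c1]
        _ = dual2 W3 * (W2 * dual2 W3) * W2 := by simp only [mul_assoc]
        _ = dual2 W3 * (-(W3 * dual2 W2)) * W2 := by rw [s23]
        _ = -((dual2 W3 * W3) * (dual2 W2 * W2)) := by
            simp only [neg_mul, mul_neg, mul_assoc]
        _ = -(((-p) • (1:Mat4)) * ((-p) • (1:Mat4))) := by rw [e3', e2']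
        _ = (-p) • ((-p) • (-1 : Mat4)) := sq_chain
    · -- J2 * J2 = -1
      apply cancel; apply cancel
      calc (-p) • ((-p) • (J2 * J2)) = ((-p) • J2) * ((-p) • J2) := by
            rw [smul_mul_assoc, mul_smul_comm]
        _ = (dual2 W1 * W3) * (dual2 W1 * W3) := by rw [c2]
        _ = dual2 W1 * (W3 * dual2 W1) * W3 := by simp only [mul_assoc]
        _ = dual2 W1 * (-(W1 * dual2 W3)) * W3 := by rw [s31]
        _ = -((dual2 W1 * W1) * (dual2 W3 * W3)) := by
            simp only [neg_mul, mul_neg, mul_assoc]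
        _ = -(((-p) • (1:Mat4)) * ((-p) • (1:Mat4))) := by rw [e1', e3']
        _ = (-p) • ((-p) • (-1 : Mat4)) := sq_chain
    · -- J3 * J3 = -1
      apply cancel; apply cancel
      calc (-p) • ((-p) • (J3 * J3)) = ((-p) • J3) * ((-p) • J3) := by
            rw [smul_mul_assoc, mul_smul_comm]
        _ = (dual2 W2 * W1) * (dual2 W2 * W1) := by rw [c3]
        _ = dual2 W2 * (W1 * dual2 W2) * W1 := by simp only [mul_assoc]
        _ = dual2 W2 * (-(W2 * dual2 W1)) * W1 := by rw [s12]
        _ = -((dual2 W2 * W2) * (dual2 W1 * W1)) := by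
            simp only [neg_mul, mul_neg, mul_assoc]
        _ = -(((-p) • (1:Mat4)) * ((-p) • (1:Mat4))) := by rw [e2', e1']
        _ = (-p) • ((-p) • (-1 : Mat4)) := sq_chain
    · -- J1 * J2 = J3
      apply cancel; apply cancel
      calc (-p) • ((-p) • (J1 * J2)) = ((-p) • J1) * ((-p) • J2) := by
            rw [smul_mul_assoc, mul_smul_comm]
        _ = (dual2 W3 * W2) * (dual2 W1 * W3) := by rw [c1, c2]
        _ = dual2 W3 * (W2 * dual2 W1) * W3 := by simp only [mul_assoc]
        _ = dual2 W3 * (-(W1 * dual2 W2)) * W3 := by rw [s21]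
        _ = -((dual2 W3 * W1) * (dual2 W2 * W3)) := by
            simp only [neg_mul, mul_neg, mul_assoc]
        _ = -((-(dual2 W1 * W3)) * (dual2 W2 * W3)) := by rw [t31]
        _ = dual2 W1 * (W3 * dual2 W2) * W3 := by
            simp only [neg_mul, mul_neg, neg_neg, mul_assoc]
        _ = dual2 W1 * (-(W2 * dual2 W3)) * W3 := by rw [s32]
        _ = -((dual2 W1 * W2) * (dual2 W3 * W3)) := by
            simp only [neg_mul, mul_neg, mul_assoc]
        _ = -((dual2 W1 * W2) * ((-p) • (1:Mat4))) := by rw [e3']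
        _ = p • (dual2 W1 * W2) := by
            rw [mul_smul_comm, mul_one, ← neg_smul, neg_neg]
        _ = p • (-(dual2 W2 * W1)) := by rw [t12]
        _ = (-p) • (dual2 W2 * W1) := by rw [smul_neg, ← neg_smul]
        _ = (-p) • ((-p) • J3) := by rw [c3]
    · -- J2 * J1 = -J3
      apply cancel; apply cancel
      calc (-p) • ((-p) • (J2 * J1)) = ((-p) • J2) * ((-p) • J1) := by
            rw [smul_mul_assoc, mul_smul_comm]
        _ = (dual2 W1 * W3) * (dual2 W3 * W2) := by rw [c2, c1]
        _ = dual2 W1 * (W3 * dual2 W3) * W2 := by simp only [mul_assoc]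
        _ = dual2 W1 * ((-p) • (1:Mat4)) * W2 := by rw [e3]
        _ = (-p) • (dual2 W1 * W2) := by
            rw [mul_smul_comm, mul_one, smul_mul_assoc]
        _ = (-p) • (-(dual2 W2 * W1)) := by rw [t12]
        _ = (-p) • ((-p) • (-J3)) := by rw [← c3]; simp [smul_neg]
    · -- J2 * J3 = J1
      apply cancel; apply cancel
      calc (-p) • ((-p) • (J2 * J3)) = ((-p) • J2) * ((-p) • J3) := by
            rw [smul_mul_assoc, mul_smul_comm]
        _ = (dual2 W1 * W3) * (dual2 W2 * W1) := by rw [c2, c3]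
        _ = dual2 W1 * (W3 * dual2 W2) * W1 := by simp only [mul_assoc]
        _ = dual2 W1 * (-(W2 * dual2 W3)) * W1 := by rw [s32]
        _ = -((dual2 W1 * W2) * (dual2 W3 * W1)) := by
            simp only [neg_mul, mul_neg, mul_assoc]
        _ = -((-(dual2 W2 * W1)) * (dual2 W3 * W1)) := by rw [t12]
        _ = dual2 W2 * (W1 * dual2 W3) * W1 := by
            simp only [neg_mul, mul_neg, neg_neg, mul_assoc]
        _ = dual2 W2 * (-(W3 * dual2 W1)) * W1 := by rw [s13]
        _ = -((dual2 W2 * W3) * (dual2 W1 * W1)) := by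
            simp only [neg_mul, mul_neg, mul_assoc]
        _ = -((dual2 W2 * W3) * ((-p) • (1:Mat4))) := by rw [e1']
        _ = p • (dual2 W2 * W3) := by
            rw [mul_smul_comm, mul_one, ← neg_smul, neg_neg]
        _ = p • (-(dual2 W3 * W2)) := by rw [t23]
        _ = (-p) • (dual2 W3 * W2) := by rw [smul_neg, ← neg_smul]
        _ = (-p) • ((-p) • J1) := by rw [c1]
    · -- J3 * J2 = -J1
      apply cancel; apply cancel
      calc (-p) • ((-p) • (J3 * J2)) = ((-p) • J3) * ((-p) • J2) := by
            rw [smul_mul_assoc, mul_smul_comm]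
        _ = (dual2 W2 * W1) * (dual2 W1 * W3) := by rw [c3, c2]
        _ = dual2 W2 * (W1 * dual2 W1) * W3 := by simp only [mul_assoc]
        _ = dual2 W2 * ((-p) • (1:Mat4)) * W3 := by rw [e1]
        _ = (-p) • (dual2 W2 * W3) := by
            rw [mul_smul_comm, mul_one, smul_mul_assoc]
        _ = (-p) • (-(dual2 W3 * W2)) := by rw [t23]
        _ = (-p) • ((-p) • (-J1)) := by rw [← c1]; simp [smul_neg]
    · -- J3 * J1 = J2
      apply cancel; apply cancel
      calc (-p) • ((-p) • (J3 * J1)) = ((-p) • J3) * ((-p) • J1) := by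
            rw [smul_mul_assoc, mul_smul_comm]
        _ = (dual2 W2 * W1) * (dual2 W3 * W2) := by rw [c3, c1]
        _ = dual2 W2 * (W1 * dual2 W3) * W2 := by simp only [mul_assoc]
        _ = dual2 W2 * (-(W3 * dual2 W1)) * W2 := by rw [s13]
        _ = -((dual2 W2 * W3) * (dual2 W1 * W2)) := by
            simp only [neg_mul, mul_neg, mul_assoc]
        _ = -((-(dual2 W3 * W2)) * (dual2 W1 * W2)) := by rw [t23]
        _ = dual2 W3 * (W2 * dual2 W1) * W2 := by
            simp only [neg_mul, mul_neg, neg_neg, mul_assoc]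
        _ = dual2 W3 * (-(W1 * dual2 W2)) * W2 := by rw [s21]
        _ = -((dual2 W3 * W1) * (dual2 W2 * W2)) := by
            simp only [neg_mul, mul_neg, mul_assoc]
        _ = -((dual2 W3 * W1) * ((-p) • (1:Mat4))) := by rw [e2']
        _ = p • (dual2 W3 * W1) := by
            rw [mul_smul_comm, mul_one, ← neg_smul, neg_neg]
        _ = p • (-(dual2 W1 * W3)) := by rw [t31]
        _ = (-p) • (dual2 W1 * W3) := by rw [smul_neg, ← neg_smul]
        _ = (-p) • ((-p) • J2) := by rw [c2]
    · -- J1 * J3 = -J2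
      apply cancel; apply cancel
      calc (-p) • ((-p) • (J1 * J3)) = ((-p) • J1) * ((-p) • J3) := by
            rw [smul_mul_assoc, mul_smul_comm]
        _ = (dual2 W3 * W2) * (dual2 W2 * W1) := by rw [c1, c3]
        _ = dual2 W3 * (W2 * dual2 W2) * W1 := by simp only [mul_assoc]
        _ = dual2 W3 * ((-p) • (1:Mat4)) * W1 := by rw [e2]
        _ = (-p) • (dual2 W3 * W1) := by
            rw [mul_smul_comm, mul_one, smul_mul_assoc]
        _ = (-p) • (-(dual2 W1 * W3)) := by rw [t31]
        _ = (-p) • ((-p) • (-J2)) := by rw [← c2]; simp [smul_neg]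
  · rintro ⟨q11, q22, q33, q12, q21, q23, q32, q31, q13⟩
    have trJ1 : J1.trace = 0 := by
      have h1 : J1.trace = (J2 * J3).trace := by rw [q23]
      have h2 : (J2 * J3).trace = (J3 * J2).trace := Matrix.trace_mul_comm _ _
      rw [q32, Matrix.trace_neg] at h2
      linarith
    have trJ2 : J2.trace = 0 := by
      have h1 : J2.trace = (J3 * J1).trace := by rw [q31]
      have h2 : (J3 * J1).trace = (J1 * J3).trace := Matrix.trace_mul_comm _ _
      rw [q13, Matrix.trace_neg] at h2
      linarith
    have trJ3 : J3.trace = 0 := by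
      have h1 : J3.trace = (J1 * J2).trace := by rw [q12]
      have h2 : (J1 * J2).trace = (J2 * J1).trace := Matrix.trace_mul_comm _ _
      rw [q21, Matrix.trace_neg] at h2
      linarith
    have w12 : w22 W1 W2 = 0 := by
      have h0 : (W1 * dual2 W2).trace = 0 := by
        rw [← hJ3, mul_assoc, Matrix.trace_mul_comm, mul_assoc, hk_self' W2 hW2,
          mul_smul_comm, mul_one, Matrix.trace_smul, trJ3]
        simp
      have h := hk_trace W1 W2 hW1
      rw [h0] at h; linarith
    have w23 : w22 W2 W3 = 0 := by
      have h0 : (W2 * dual2 W3).trace = 0 := by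
        rw [← hJ1, mul_assoc, Matrix.trace_mul_comm, mul_assoc, hk_self' W3 hW3,
          mul_smul_comm, mul_one, Matrix.trace_smul, trJ1]
        simp
      have h := hk_trace W2 W3 hW2
      rw [h0] at h; linarith
    have w13 : w22 W1 W3 = 0 := by
      rw [hk_w22_comm]
      have h0 : (W3 * dual2 W1).trace = 0 := by
        rw [← hJ2, mul_assoc, Matrix.trace_mul_comm, mul_assoc, hk_self' W1 hW1,
          mul_smul_comm, mul_one, Matrix.trace_smul, trJ2]
        simp
      have h := hk_trace W3 W1 hW3
      rw [h0] at h; linarith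
    have d1pos : 0 < W1.det := by
      rw [hk_det W1 hW1]; positivity
    have d2pos : 0 < W2.det := by
      rw [hk_det W2 hW2]; positivity
    have d3pos : 0 < W3.det := by
      rw [hk_det W3 hW3]; positivity
    have dd1 : W1.det = W2.det * J3.det := by rw [← hJ3, Matrix.det_mul]
    have dd2 : W2.det = W3.det * J1.det := by rw [← hJ1, Matrix.det_mul]
    have dJ3sq : J3.det * J3.det = 1 := by
      rw [← Matrix.det_mul, q33]
      simp [Matrix.det_neg, Fintype.card_fin]
      norm_num
    have dJ1sq : J1.det * J1.det = 1 := by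
      rw [← Matrix.det_mul, q11]
      simp [Matrix.det_neg, Fintype.card_fin]
      norm_num
    have dJ3pos : 0 < J3.det := by
      have h : 0 < W2.det * J3.det := by rw [← dd1]; exact d1pos
      nlinarith
    have dJ1pos : 0 < J1.det := by
      have h : 0 < W3.det * J1.det := by rw [← dd2]; exact d2pos
      nlinarith
    have dJ3one : J3.det = 1 := by
      have h0 : (J3.det - 1) * (J3.det + 1) = 0 := by linear_combination dJ3sq
      rcases mul_eq_zero.mp h0 with h | h
      · linarith
      · linarith
    have dJ1one : J1.det = 1 := by
      have h0 : (J1.det - 1) * (J1.det + 1) = 0 := by linear_combination dJ1sq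
      rcases mul_eq_zero.mp h0 with h | h
      · linarith
      · linarith
    have hd12 : W1.det = W2.det := by rw [dd1, dJ3one, mul_one]
    have hd23 : W2.det = W3.det := by rw [dd2, dJ1one, mul_one]
    have hpf12 : w22 W1 W1 = w22 W2 W2 := by
      have h : (w22 W1 W1 / 2) ^ 2 = (w22 W2 W2 / 2) ^ 2 := by
        rw [← hk_det W1 hW1, ← hk_det W2 hW2]; exact hd12
      have := pow_left_inj₀ (by positivity : (0:ℝ) ≤ w22 W1 W1 / 2)
        (by positivity : (0:ℝ) ≤ w22 W2 W2 / 2) (two_ne_zero) |>.mp h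
      linarith
    have hpf23 : w22 W2 W2 = w22 W3 W3 := by
      have h : (w22 W2 W2 / 2) ^ 2 = (w22 W3 W3 / 2) ^ 2 := by
        rw [← hk_det W2 hW2, ← hk_det W3 hW3]; exact hd23
      have := pow_left_inj₀ (by positivity : (0:ℝ) ≤ w22 W2 W2 / 2)
        (by positivity : (0:ℝ) ≤ w22 W3 W3 / 2) (two_ne_zero) |>.mp h
      linarith
    exact ⟨w12, w13, w23, hpf12, hpf23⟩


end
end

section
/- Let (V,g) be a 4-dimensional oriented inner product space, ρ and ω nondegenerate 2-forms with positive squares, K := (ω∧ρ)/dvol_ρ, and ω^ρ := ω - Kρ. Then for every vector X ∈ V, (ι(X)ω)∧ρ + ω^ρ∧ι(X)ρ = 0. -/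
open Matrix MeasureTheory

noncomputable section

/-- for 2-forms ρ, ω with positive squares, K = (ω∧ρ)/dvol_ρ and
ω^ρ = ω - Kρ, every vector X satisfies (ι(X)ω)∧ρ + ω^ρ∧ι(X)ρ = 0. -/
theorem wedge_contraction_identity (P W : Mat4)
    (hP : Pᵀ = -P) (hW : Wᵀ = -W)
    (hPpos : 0 < w22 P P) (hWpos : 0 < w22 W W) (X : V4) :
    w21 P (iota2 X W) + w21 (W - (w22 W P / (w22 P P / 2)) • P) (iota2 X P) = 0 := by
  have hP' : ∀ i j, P j i = -P i j := fun i j => by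
    have := congrFun (congrFun hP i) j
    simpa [Matrix.transpose_apply] using this
  have hW' : ∀ i j, W j i = -W i j := fun i j => by
    have := congrFun (congrFun hW i) j
    simpa [Matrix.transpose_apply] using this
  have hPd : ∀ i, P i i = 0 := fun i => by have := hP' i i; linarith
  have hWd : ∀ i, W i i = 0 := fun i => by have := hW' i i; linarith
  have hne : w22 P P / 2 ≠ 0 := by positivity
  set K : ℝ := w22 W P / (w22 P P / 2) with hKdef
  have hK : K * (w22 P P / 2) = w22 W P := div_mul_cancel₀ _ hne
  clear_value K
  funext i
  fin_cases i <;>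
  · simp only [w21, iota2, w22, Matrix.mulVec, dotProduct, Fin.sum_univ_four,
      Matrix.transpose_apply, Matrix.sub_apply, Matrix.smul_apply, smul_eq_mul,
      hP' 0 1, hP' 0 2, hP' 0 3, hP' 1 2, hP' 1 3, hP' 2 3,
      hW' 0 1, hW' 0 2, hW' 0 3, hW' 1 2, hW' 1 3, hW' 2 3,
      hPd, hWd, Pi.add_apply, Pi.zero_apply, Matrix.cons_val_zero, Matrix.cons_val_one,
      Matrix.head_cons, Matrix.cons_val_two, Matrix.cons_val_three, Matrix.head_fin_const,
      Matrix.tail_cons, show (⟨0, by omega⟩ : Fin 4) = 0 from rfl,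
      show (⟨1, by omega⟩ : Fin 4) = 1 from rfl, show (⟨2, by omega⟩ : Fin 4) = 2 from rfl,
      show (⟨3, by omega⟩ : Fin 4) = 3 from rfl] at hK ⊢
    first
    | linear_combination (X 0) * hK | linear_combination (-(X 0)) * hK
    | linear_combination (X 1) * hK | linear_combination (-(X 1)) * hK
    | linear_combination (X 2) * hK | linear_combination (-(X 2)) * hK
    | linear_combination (X 3) * hK | linear_combination (-(X 3)) * hK

end
end

section
/- Let M be a closed oriented Riemannian 4-manifold with volume form dvol and total volume Vol(M), let a ∈ H²(M;ℝ) with a² > 0, and let ρ be a symplectic form representing a with ρ∧ρ > 0. Then (∫_M |ρ| dvol)² ≤ c·(E(ρ) - Vol(M)), where c := ⟨a²,[M]⟩ = ∫_M ρ∧ρ and E(ρ) := ∫_M 2|ρ⁺|²/(|ρ⁺|² - |ρ⁻|²) dvol. -/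
open Matrix MeasureTheory

noncomputable section

/-!
Pointwise, `2|ρ⁺|² = |ρ|² + ρ∧ρ`, so the energy density is `|ρ|²/(ρ∧ρ) + 1` and
`E(ρ) - Vol(M) = ∫ |ρ|²/(ρ∧ρ)`. Writing `|ρ| = √(ρ∧ρ · |ρ|²/(ρ∧ρ))`, the Cauchy–Schwarz inequality
bounds `(∫ |ρ|)²` by `∫ ρ∧ρ · ∫ |ρ|²/(ρ∧ρ) = c · (E(ρ) - Vol(M))`.
-/

lemma ip2std_self_nonneg (A : Mat4) : 0 ≤ ip2std A A := by
  have := (posSemidef_conjTranspose_mul_self A).trace_nonneg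
  rw [conjTranspose_eq_transpose_of_trivial] at this
  unfold ip2std; positivity

lemma two_mul_ip2std_selfDual_eq {A : Mat4} (hA : Aᵀ = -A) :
    2 * ip2std ((2:ℝ)⁻¹ • (A + dual2 A)) ((2:ℝ)⁻¹ • (A + dual2 A))
      = ip2std A A + w22 A A := by
  have hskew : ∀ i j, A j i = -A i j := fun i j => by
    simpa using congrFun (congrFun hA i) j
  have hdiag : ∀ i, A i i = 0 := fun i => by linarith [hskew i i]
  simp only [ip2std, w22, dual2, trace, diag_apply, Matrix.mul_apply, Fin.sum_univ_four,
    transpose_apply, Matrix.add_apply, Matrix.smul_apply, smul_eq_mul, of_apply, cons_val',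
    cons_val_fin_one, cons_val_zero, cons_val_one, cons_val, hdiag,
    hskew 0 1, hskew 0 2, hskew 0 3, hskew 1 2, hskew 1 3, hskew 2 3]
  ring

theorem sq_integral_sqrt_mul_le {α : Type*} [MeasurableSpace α] {μ : Measure α} {f g : α → ℝ}
    (hf0 : 0 ≤ᵐ[μ] f) (hg0 : 0 ≤ᵐ[μ] g) (hf : Integrable f μ) (hg : Integrable g μ) :
    (∫ x, √(f x * g x) ∂μ) ^ 2 ≤ (∫ x, f x ∂μ) * ∫ x, g x ∂μ := by
  have memLp_sqrt : ∀ {h : α → ℝ}, 0 ≤ᵐ[μ] h → Integrable h μ →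
      MemLp (fun x => √(h x)) (ENNReal.ofReal 2) μ := fun {h} h0 hh => by
    rw [ENNReal.ofReal_ofNat, memLp_two_iff_integrable_sq
      (Real.continuous_sqrt.comp_aestronglyMeasurable hh.aestronglyMeasurable)]
    exact hh.congr (by filter_upwards [h0] with x hx using (Real.sq_sqrt hx).symm)
  have sq_sqrt_ae : ∀ {h : α → ℝ}, 0 ≤ᵐ[μ] h → ∫ x, √(h x) ^ (2:ℝ) ∂μ = ∫ x, h x ∂μ :=
    fun {h} h0 => integral_congr_ae (by
      filter_upwards [h0] with x hx
      rw [Real.rpow_two, Real.sq_sqrt hx])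
  have holder := integral_mul_le_Lp_mul_Lq_of_nonneg Real.HolderConjugate.two_two
    (.of_forall fun x => Real.sqrt_nonneg (f x)) (.of_forall fun x => Real.sqrt_nonneg (g x))
    (memLp_sqrt hf0 hf) (memLp_sqrt hg0 hg)
  have hfg : ∫ x, √(f x) * √(g x) ∂μ = ∫ x, √(f x * g x) ∂μ := integral_congr_ae (by
    filter_upwards [hf0] with x hx using (Real.sqrt_mul hx _).symm)
  rw [hfg, sq_sqrt_ae hf0, sq_sqrt_ae hg0, ← Real.sqrt_eq_rpow, ← Real.sqrt_eq_rpow,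
    ← Real.sqrt_mul (integral_nonneg_of_ae hf0)] at holder
  calc (∫ x, √(f x * g x) ∂μ) ^ 2 ≤ (√((∫ x, f x ∂μ) * ∫ x, g x ∂μ)) ^ 2 :=
        pow_le_pow_left₀ (integral_nonneg fun x => Real.sqrt_nonneg _) holder 2
    _ = _ := Real.sq_sqrt (mul_nonneg (integral_nonneg_of_ae hf0) (integral_nonneg_of_ae hg0))

theorem donaldson_L1_estimate_general {M : Type*} [MeasurableSpace M]
    (μ : Measure M) [IsFiniteMeasure μ]
    (ρ : M → Mat4)
    (hanti : ∀ x, (ρ x)ᵀ = -(ρ x))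
    (hndg : ∀ x, 0 < w22 (ρ x) (ρ x))
    (h1 : Integrable (fun x => w22 (ρ x) (ρ x)) μ)
    (h2 : Integrable (fun x =>
      2 * ip2std ((2:ℝ)⁻¹ • (ρ x + dual2 (ρ x))) ((2:ℝ)⁻¹ • (ρ x + dual2 (ρ x))) /
        w22 (ρ x) (ρ x)) μ)
    (c E : ℝ)
    (hc : c = ∫ x, w22 (ρ x) (ρ x) ∂μ)
    (hE : E = ∫ x,
      2 * ip2std ((2:ℝ)⁻¹ • (ρ x + dual2 (ρ x))) ((2:ℝ)⁻¹ • (ρ x + dual2 (ρ x))) /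
        w22 (ρ x) (ρ x) ∂μ) :
    (∫ x, Real.sqrt (ip2std (ρ x) (ρ x)) ∂μ) ^ 2 ≤ c * (E - (μ Set.univ).toReal) := by
  have energy_density : ∀ x,
      2 * ip2std ((2:ℝ)⁻¹ • (ρ x + dual2 (ρ x))) ((2:ℝ)⁻¹ • (ρ x + dual2 (ρ x))) /
        w22 (ρ x) (ρ x) = ip2std (ρ x) (ρ x) / w22 (ρ x) (ρ x) + 1 := fun x => by
    rw [two_mul_ip2std_selfDual_eq (hanti x), add_div, div_self (hndg x).ne']
  have hratio : Integrable (fun x => ip2std (ρ x) (ρ x) / w22 (ρ x) (ρ x)) μ :=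
    (h2.sub (integrable_const 1)).congr <| .of_forall fun x => by
      rw [Pi.sub_apply, energy_density x, add_sub_cancel_right]
  have excess_energy_eq : E - (μ Set.univ).toReal = ∫ x, ip2std (ρ x) (ρ x) / w22 (ρ x) (ρ x) ∂μ := by
    simp only [hE, energy_density, integral_add hratio (integrable_const 1), integral_const,
      smul_eq_mul, mul_one, Measure.real, add_sub_cancel_right]
  have sqrt_norm_sq_eq : ∀ x, √(ip2std (ρ x) (ρ x)) =
      √(w22 (ρ x) (ρ x) * (ip2std (ρ x) (ρ x) / w22 (ρ x) (ρ x))) := fun x => by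
    rw [mul_div_cancel₀ _ (hndg x).ne']
  simp only [sqrt_norm_sq_eq, hc, excess_energy_eq]
  exact sq_integral_sqrt_mul_le (.of_forall fun x => (hndg x).le)
    (.of_forall fun x => div_nonneg (ip2std_self_nonneg _) (hndg x).le) h1 hratio

/-- Donaldson's L¹ estimate: on a closed oriented Riemannian
4-manifold (modelled as a finite measure space carrying the 2-form ρ in
oriented orthonormal frames), (∫|ρ|)² ≤ c·(E(ρ) - Vol(M)), where
c = ∫ ρ∧ρ and E(ρ) = ∫ 2|ρ⁺|²/(|ρ⁺|²-|ρ⁻|²). -/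
theorem donaldson_L1_estimate {M : Type*} [MeasurableSpace M]
    (μ : Measure M) [IsFiniteMeasure μ]
    (ρ : M → Mat4)
    (hanti : ∀ x, (ρ x)ᵀ = -(ρ x))
    (hndg : ∀ x, 0 < w22 (ρ x) (ρ x))
    (h1 : Integrable (fun x => w22 (ρ x) (ρ x)) μ)
    (h2 : Integrable (fun x =>
      2 * ip2std ((2:ℝ)⁻¹ • (ρ x + dual2 (ρ x))) ((2:ℝ)⁻¹ • (ρ x + dual2 (ρ x))) /
        w22 (ρ x) (ρ x)) μ)
    (h3 : Integrable (fun x => Real.sqrt (ip2std (ρ x) (ρ x))) μ)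
    (c E : ℝ)
    (hc : c = ∫ x, w22 (ρ x) (ρ x) ∂μ)
    (hE : E = ∫ x,
      2 * ip2std ((2:ℝ)⁻¹ • (ρ x + dual2 (ρ x))) ((2:ℝ)⁻¹ • (ρ x + dual2 (ρ x))) /
        w22 (ρ x) (ρ x) ∂μ) :
    (∫ x, Real.sqrt (ip2std (ρ x) (ρ x)) ∂μ) ^ 2 ≤ c * (E - (μ Set.univ).toReal) :=
  donaldson_L1_estimate_general μ ρ hanti hndg h1 h2 c E hc hE

end
end

section
/- Let M be a closed oriented Riemannian 4-manifold and ρ a symplectic form with ρ∧ρ > 0 cohomologous to a self-dual symplectic form ω. Then E(ρ) := ∫_M 2|ρ⁺|²/(|ρ⁺|²-|ρ⁻|²) dvol ≥ 2 Vol(M), with equality if and only if ρ = ω; in particular ω is the unique absolute minimum of E on its cohomology class. -/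
open Matrix MeasureTheory

noncomputable section

/-!
For an antisymmetric 2-form `A` one has `A ∧ A = |A⁺|² - |A⁻|²`, so where `A ∧ A > 0` the energy
density `2|A⁺|² / (A ∧ A)` equals `2 + 2|A⁻|² / (A ∧ A) ≥ 2`, with equality exactly where `A` is
self-dual. A continuous function `≥ 2` on a compact space integrates to `2 Vol` only if it is
identically `2`, since the measure charges every nonempty open set; then `ρ` is self-dual, and a
self-dual form cohomologous to `ω` is `ω`.
-/

def selfDualPart (A : Mat4) : Mat4 := (2:ℝ)⁻¹ • (A + dual2 A)

def antiSelfDualPart (A : Mat4) : Mat4 := (2:ℝ)⁻¹ • (A - dual2 A)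

def energyDensity (A : Mat4) : ℝ :=
  2 * ip2std (selfDualPart A) (selfDualPart A) / w22 A A

lemma ip2std_self_eq_zero_iff {A : Mat4} : ip2std A A = 0 ↔ A = 0 := by
  rw [ip2std, ← conjTranspose_eq_transpose_of_trivial, ← trace_conjTranspose_mul_self_eq_zero_iff]
  simp

lemma antiSelfDualPart_eq_zero_iff {A : Mat4} : antiSelfDualPart A = 0 ↔ dual2 A = A := by
  simp [antiSelfDualPart, sub_eq_zero, eq_comm]

lemma ip2std_selfDualPart_self {A : Mat4} (hA : Aᵀ = -A) :
    ip2std (selfDualPart A) (selfDualPart A) =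
      w22 A A + ip2std (antiSelfDualPart A) (antiSelfDualPart A) := by
  have e : ∀ i j, A j i = -A i j := fun i j => by simpa using congrFun (congrFun hA i) j
  have hdiag : ∀ i, A i i = 0 := fun i => by linarith [e i i]
  simp only [ip2std, selfDualPart, antiSelfDualPart, w22, dual2, trace, diag, mul_apply,
    Fin.sum_univ_four, transpose_apply, Matrix.smul_apply, Matrix.add_apply, Matrix.sub_apply,
    of_apply, cons_val', cons_val_zero, cons_val_one, cons_val, cons_val_fin_one, smul_eq_mul,
    hdiag, e 0 1, e 0 2, e 0 3, e 1 2, e 1 3, e 2 3]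
  ring

lemma energyDensity_eq {A : Mat4} (hA : Aᵀ = -A) (hw : w22 A A ≠ 0) :
    energyDensity A = 2 + 2 * ip2std (antiSelfDualPart A) (antiSelfDualPart A) / w22 A A := by
  rw [energyDensity, ip2std_selfDualPart_self hA]
  field_simp

lemma two_le_energyDensity {A : Mat4} (hA : Aᵀ = -A) (hw : 0 < w22 A A) :
    2 ≤ energyDensity A := by
  have := ip2std_self_nonneg (antiSelfDualPart A)
  rw [energyDensity_eq hA hw.ne']
  exact le_add_of_nonneg_right (by positivity)

lemma energyDensity_eq_two_iff {A : Mat4} (hA : Aᵀ = -A) (hw : w22 A A ≠ 0) :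
    energyDensity A = 2 ↔ dual2 A = A := by
  rw [energyDensity_eq hA hw, ← antiSelfDualPart_eq_zero_iff, ← ip2std_self_eq_zero_iff]
  simp [hw]

lemma Continuous.energyDensity {X : Type*} [TopologicalSpace X] {ρ : X → Mat4}
    (hρ : Continuous ρ) (hw : ∀ x, w22 (ρ x) (ρ x) ≠ 0) :
    Continuous fun x => energyDensity (ρ x) := by
  unfold _root_.energyDensity ip2std selfDualPart
  refine Continuous.div ?_ ?_ hw
  · unfold dual2; fun_prop
  · unfold w22; fun_prop

section

variable {X : Type*} [MeasurableSpace X] (μ : Measure X) [IsFiniteMeasure μ]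

lemma const_mul_measureReal_univ_le_integral {f : X → ℝ} (hf : Integrable f μ) {c : ℝ}
    (hc : ∀ x, c ≤ f x) : c * μ.real Set.univ ≤ ∫ x, f x ∂μ := by
  simpa [mul_comm] using integral_mono (integrable_const c) hf hc

lemma integral_eq_const_mul_measureReal_univ_iff [TopologicalSpace X] [OpensMeasurableSpace X]
    [CompactSpace X] [μ.IsOpenPosMeasure] {f : X → ℝ} (hf : Continuous f) {c : ℝ}
    (hc : ∀ x, c ≤ f x) : ∫ x, f x ∂μ = c * μ.real Set.univ ↔ ∀ x, f x = c := by
  have hfi : Integrable f μ := hf.integrable_of_hasCompactSupport (.of_compactSpace f)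
  have hconst : ∫ _ : X, c ∂μ = c * μ.real Set.univ := by
    rw [integral_const, smul_eq_mul, mul_comm]
  rw [← hconst, eq_comm, integral_eq_iff_of_ae_le (integrable_const c) hfi (.of_forall hc),
    continuous_const.ae_eq_iff_eq μ hf, funext_iff]
  simp only [eq_comm]

end

/-- The closed oriented Riemannian 4-manifold is modelled as a compact space with a finite measure
charging open sets; `hharm` records the Hodge-theoretic input that a self-dual symplectic form
cohomologous to `ω` is harmonic and hence equals `ω`. -/
theorem energy_absolute_minimum_general {M : Type*} [TopologicalSpace M] [CompactSpace M]
    [MeasurableSpace M] [BorelSpace M]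
    (μ : Measure M) [IsFiniteMeasure μ] [μ.IsOpenPosMeasure]
    (ρ ω : M → Mat4)
    (hρcont : ∀ i j, Continuous fun x => ρ x i j)
    (hρanti : ∀ x, (ρ x)ᵀ = -(ρ x)) (hρndg : ∀ x, 0 < w22 (ρ x) (ρ x))
    (hωsd : ∀ x, dual2 (ω x) = ω x)
    (hharm : (∀ x, dual2 (ρ x) = ρ x) → ρ = ω) :
    let E := ∫ x,
      2 * ip2std ((2:ℝ)⁻¹ • (ρ x + dual2 (ρ x))) ((2:ℝ)⁻¹ • (ρ x + dual2 (ρ x))) /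
        w22 (ρ x) (ρ x) ∂μ
    2 * (μ Set.univ).toReal ≤ E ∧ (E = 2 * (μ Set.univ).toReal ↔ ρ = ω) := by
  intro E
  have hcont : Continuous fun x => energyDensity (ρ x) :=
    (continuous_pi fun i => continuous_pi (hρcont i)).energyDensity fun x => (hρndg x).ne'
  have hge : ∀ x, 2 ≤ energyDensity (ρ x) := fun x => two_le_energyDensity (hρanti x) (hρndg x)
  refine ⟨const_mul_measureReal_univ_le_integral μ (hcont.integrable_of_hasCompactSupport
    (.of_compactSpace _)) hge, (integral_eq_const_mul_measureReal_univ_iff μ hcont hge).trans ?_⟩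
  simp only [energyDensity_eq_two_iff (hρanti _) (hρndg _).ne']
  exact ⟨hharm, fun h => h ▸ hωsd⟩

/-- if ρ is cohomologous to a self-dual symplectic form ω on a
closed oriented Riemannian 4-manifold (modelled as a compact space with a
finite open-positive measure; the Hodge-theoretic consequences of being
cohomologous are the hypotheses hvol and hharm), then E(ρ) ≥ 2 Vol(M) with
equality iff ρ = ω; in particular ω is the unique absolute minimum of E. -/
theorem energy_absolute_minimum {M : Type*} [TopologicalSpace M] [CompactSpace M]
    [MeasurableSpace M] [BorelSpace M]
    (μ : Measure M) [IsFiniteMeasure μ] [μ.IsOpenPosMeasure]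
    (ρ ω : M → Mat4)
    (hρcont : ∀ i j, Continuous fun x => ρ x i j)
    (hρanti : ∀ x, (ρ x)ᵀ = -(ρ x)) (hρndg : ∀ x, 0 < w22 (ρ x) (ρ x))
    (hωanti : ∀ x, (ω x)ᵀ = -(ω x)) (hωndg : ∀ x, 0 < w22 (ω x) (ω x))
    (hωsd : ∀ x, dual2 (ω x) = ω x)
    (hvol : ∫ x, w22 (ρ x) (ρ x) ∂μ = ∫ x, w22 (ω x) (ω x) ∂μ)
    (hharm : (∀ x, dual2 (ρ x) = ρ x) → ρ = ω) :
    let E := ∫ x,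
      2 * ip2std ((2:ℝ)⁻¹ • (ρ x + dual2 (ρ x))) ((2:ℝ)⁻¹ • (ρ x + dual2 (ρ x))) /
        w22 (ρ x) (ρ x) ∂μ
    2 * (μ Set.univ).toReal ≤ E ∧ (E = 2 * (μ Set.univ).toReal ↔ ρ = ω) :=
  energy_absolute_minimum_general μ ρ ω hρcont hρanti hρndg hωsd hharm

end
end

section
/- For every real linear subspace W ⊂ ℍ² of real dimension at most 4, there exists a quaternion λ ∈ ℍ such that the quaternionic line V_λ := {(x, xλ) : x ∈ ℍ} intersects W only in 0. -/
/-!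
If every line `V_λ` met `W` nontrivially, every `λ` would be a slope `x⁻¹ y` of some
`(x, y) ∈ W` with `x ≠ 0`. As `dim W ≤ 4`, `W` is the image of a linear map `F : ℍ → ℍ²`, and
the slope of `F q` is invariant under real scaling of `q`, so its derivative kills the radial
direction and has zero determinant everywhere; by the Jacobian form of
Sard's theorem its image is Lebesgue-null, so it cannot be all of `ℍ`.
-/

open MeasureTheory Set

section SmulInvariant

variable {E F : Type*} [NormedAddCommGroup E] [NormedSpace ℝ E]
  [NormedAddCommGroup F] [NormedSpace ℝ F]

theorem fderiv_apply_self_eq_zero_of_smul_invariant {g : E → F} {q : E}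
    (hg : DifferentiableAt ℝ g q) (hinv : ∀ c : ℝ, c ≠ 0 → g (c • q) = g q) :
    fderiv ℝ g q q = 0 := by
  have hray : HasDerivAt (fun t : ℝ => t • q) q 1 := by
    simpa using (hasDerivAt_id (1 : ℝ)).smul_const q
  have hline : HasDerivAt (fun t : ℝ => g (t • q)) (fderiv ℝ g q q) 1 :=
    HasFDerivAt.comp_hasDerivAt (x := 1) (by rw [one_smul]; exact hg.hasFDerivAt) hray
  have hconst : HasDerivAt (fun t : ℝ => g (t • q)) 0 1 :=
    (hasDerivAt_const 1 (g q)).congr_of_eventuallyEq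
      ((eventually_ne_nhds one_ne_zero).mono hinv)
  exact hline.unique hconst

theorem addHaar_image_eq_zero_of_smul_invariant [FiniteDimensional ℝ E] [MeasurableSpace E]
    [BorelSpace E] (μ : Measure E) [μ.IsAddHaarMeasure] {g : E → E} {s : Set E} (hs : 0 ∉ s)
    (hg : ∀ q ∈ s, DifferentiableAt ℝ g q) (hinv : ∀ q ∈ s, ∀ c : ℝ, c ≠ 0 → g (c • q) = g q) :
    μ (g '' s) = 0 :=
  addHaar_image_eq_zero_of_det_fderivWithin_eq_zero μ
    (fun q hq => (hg q hq).hasFDerivAt.hasFDerivWithinAt) fun q hq =>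
      LinearMap.det_eq_zero_iff_ker_ne_bot.2 <| (Submodule.ne_bot_iff _).2
        ⟨q, fderiv_apply_self_eq_zero_of_smul_invariant (hg q hq) (hinv q hq),
          ne_of_mem_of_not_mem hq hs⟩

end SmulInvariant

section Slopes

variable {D : Type*} [NormedDivisionRing D] [NormedAlgebra ℝ D]

theorem smul_inv_mul_smul {c : ℝ} (hc : c ≠ 0) (a b : D) : (c • a)⁻¹ * (c • b) = a⁻¹ * b := by
  rw [smul_inv₀, smul_mul_smul_comm, inv_mul_cancel₀ hc, one_smul]

theorem addHaar_slopes_eq_zero [FiniteDimensional ℝ D] [MeasurableSpace D] [BorelSpace D]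
    (μ : Measure D) [μ.IsAddHaarMeasure] (F : D →ₗ[ℝ] D × D) :
    μ ((fun q => (F q).1⁻¹ * (F q).2) '' {q | (F q).1 ≠ 0}) = 0 := by
  refine addHaar_image_eq_zero_of_smul_invariant μ (by simp) (fun q hq => ?_) fun q _ c hc => ?_
  · have hF : Differentiable ℝ F := F.toContinuousLinearMap.differentiable
    exact ((differentiableAt_inv hq).comp q hF.fst.differentiableAt).mul hF.snd.differentiableAt
  · simp only [map_smul, Prod.smul_fst, Prod.smul_snd, smul_inv_mul_smul hc]

end Slopes

/-- Lemma B.1: for every real subspace W of ℍ² of real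
dimension at most 4 there is a quaternion λ such that the quaternionic line
V_λ = {(x, xλ)} meets W only in 0. -/
theorem quaternionic_line_avoids_subspace
    (W : Submodule ℝ (Quaternion ℝ × Quaternion ℝ))
    (hW : Module.finrank ℝ W ≤ 4) :
    ∃ lam : Quaternion ℝ, ∀ x : Quaternion ℝ, (x, x * lam) ∈ W → x = 0 := by
  by_contra! hbad
  obtain ⟨i, hi⟩ := finrank_le_iff_exists_linearMap.1
    (hW.trans_eq (Quaternion.finrank_eq_four (R := ℝ)).symm)
  obtain ⟨r, hr⟩ := i.exists_leftInverse_of_injective (LinearMap.ker_eq_bot.2 hi)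
  let F := W.subtype ∘ₗ r
  have hslopes : (fun q => (F q).1⁻¹ * (F q).2) '' {q | (F q).1 ≠ 0} = univ := by
    refine eq_univ_of_forall fun lam => ?_
    obtain ⟨x, hxW, hx⟩ := hbad lam
    have hF : F (i ⟨_, hxW⟩) = (x, x * lam) := by simp [F, ← LinearMap.comp_apply, hr]
    exact ⟨i ⟨_, hxW⟩, by simpa [hF] using hx, by simp [hF, hx]⟩
  borelize (Quaternion ℝ)
  have hnull := addHaar_slopes_eq_zero Measure.addHaar F
  rw [hslopes] at hnull
  exact Measure.measure_univ_ne_zero.2 (NeZero.ne _) hnull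
end
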